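/- arXiv:2509.24354 — 4 statements merged into one kernel-verified Lean document; each statement's English description precedes it below -/
import Mathlib

section
/- Let α > 1 and r ≥ 2 be given with r an integer. Then the function f(x) = (1 - r·x)/(1 - x)^{r/α} is strictly decreasing on the interval [0, 1). -/
/-! By the quotient rule, the derivative of `(1 - c x) / (1 - x) ^ p` has the sign of
`p (1 - c x) - c (1 - x)`, which is negative on `[0, 1)` when `c ≥ 1` and `0 ≤ p < c`, because
`p (1 - c x) ≤ p (1 - x) < c (1 - x)`. Take `c = r` and `p = r / α`. -/

open Set

theorem hasDerivAt_one_sub_mul_div_one_sub_rpow (c p : ℝ) {x : ℝ} (hx : x < 1) :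
    HasDerivAt (fun y : ℝ => (1 - c * y) / (1 - y) ^ p)
      ((1 - x) ^ (p - 1) * (p * (1 - c * x) - c * (1 - x)) / ((1 - x) ^ p) ^ 2) x := by
  have hpos : 0 < 1 - x := sub_pos.mpr hx
  have hnum : HasDerivAt (fun y : ℝ => 1 - c * y) (-c) x := by
    simpa using ((hasDerivAt_id x).const_mul c).const_sub 1
  have hden : HasDerivAt (fun y : ℝ => (1 - y) ^ p) (p * (1 - x) ^ (p - 1) * (-1)) x :=
    (Real.hasDerivAt_rpow_const (Or.inl hpos.ne')).comp x ((hasDerivAt_id x).const_sub 1)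
  refine (hnum.div hden (Real.rpow_pos_of_pos hpos p).ne').congr_deriv ?_
  rw [← sub_add_cancel p 1, Real.rpow_add_one hpos.ne', add_sub_cancel_right]
  ring

theorem strictAntiOn_one_sub_mul_div_one_sub_rpow {c p : ℝ} (hc : 1 ≤ c) (hp : 0 ≤ p)
    (hpc : p < c) :
    StrictAntiOn (fun x : ℝ => (1 - c * x) / (1 - x) ^ p) (Ico 0 1) := by
  have hderiv : ∀ x ∈ Ico (0 : ℝ) 1, HasDerivAt (fun y : ℝ => (1 - c * y) / (1 - y) ^ p)
      ((1 - x) ^ (p - 1) * (p * (1 - c * x) - c * (1 - x)) / ((1 - x) ^ p) ^ 2) x :=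
    fun x hx => hasDerivAt_one_sub_mul_div_one_sub_rpow c p hx.2
  refine strictAntiOn_of_hasDerivWithinAt_neg (convex_Ico 0 1)
    (fun x hx => (hderiv x hx).continuousAt.continuousWithinAt)
    (fun x hx => (hderiv x (interior_subset hx)).hasDerivWithinAt) fun x hx => ?_
  obtain ⟨hx0, hx1⟩ := interior_subset (s := Ico (0 : ℝ) 1) hx
  have hpos : 0 < 1 - x := sub_pos.mpr hx1
  have hbracket : p * (1 - c * x) - c * (1 - x) < 0 := by
    nlinarith [mul_nonneg hp (mul_nonneg (sub_nonneg.mpr hc) hx0)]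
  exact div_neg_of_neg_of_pos (mul_neg_of_pos_of_neg (Real.rpow_pos_of_pos hpos _) hbracket)
    (pow_pos (Real.rpow_pos_of_pos hpos p) 2)

/-- The function f(x) = (1 - r·x)/(1 - x)^{r/α} is strictly decreasing on [0, 1),
for real α > 1 and integer r ≥ 2. -/
theorem fact1_strictAntiOn (α : ℝ) (hα : 1 < α) (r : ℕ) (hr : 2 ≤ r) :
    StrictAntiOn (fun x : ℝ => (1 - (r : ℝ) * x) / (1 - x) ^ ((r : ℝ) / α))
      (Set.Ico (0 : ℝ) 1) := by
  have hr1 : (1 : ℝ) ≤ r := by exact_mod_cast one_le_two.trans hr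
  have hrpos : (0 : ℝ) < r := one_pos.trans_le hr1
  exact strictAntiOn_one_sub_mul_div_one_sub_rpow hr1 (div_nonneg hrpos.le (by linarith))
    (div_lt_self hrpos hα)
end

section
/- Let α > 1 and r ≥ 2 be real and integer parameters respectively, and let 1 ≤ i ≤ r be an integer. Then for all sufficiently large integers m, C(m+1, i) · (m/(m+1))^{i/α} - C(m, i) ≥ C(m-1, i-1) · (1 - 1/α - 1/(α(m-r+1))). -/
/-!
Write `i = j + 1`. Since `log t ≥ 1 - 1/t`, the power satisfies the Bernoulli-type bound
`(m/(m+1))^β ≥ 1 - β/m` for `β ≥ 0`. With `β = (j+1)/α`, Pascal's rule and the absorption identity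
`(j+1) C(m+1, j+1) = (m+1) C(m, j)` turn `C(m+1, j+1) (1 - β/m) - C(m, j+1)` into exactly
`C(m, j) (1 - 1/α - 1/(αm))`. This factor tends to `1 - 1/α > 0`, so for large `m` it is nonnegative
and dominates `C(m-1, j) (1 - 1/α - 1/(α(m-r+1)))`.
-/

open Filter Topology

theorem Real.one_add_mul_log_le_rpow {t : ℝ} (ht : 0 < t) (β : ℝ) :
    1 + β * Real.log t ≤ t ^ β := by
  rw [Real.rpow_def_of_pos ht, mul_comm]
  exact Real.add_one_le_exp _ |>.trans_eq' (add_comm _ _)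

theorem Real.one_sub_div_le_div_add_one_rpow {x β : ℝ} (hx : 0 < x) (hβ : 0 ≤ β) :
    1 - β / x ≤ (x / (x + 1)) ^ β := by
  have hlog : -(1 / x) ≤ Real.log (x / (x + 1)) := by
    have h := Real.one_sub_inv_le_log_of_pos (by positivity : 0 < x / (x + 1))
    rwa [inv_div, add_div, div_self hx.ne', sub_add_cancel_left] at h
  calc 1 - β / x = 1 + β * -(1 / x) := by ring
    _ ≤ 1 + β * Real.log (x / (x + 1)) := by gcongr
    _ ≤ _ := Real.one_add_mul_log_le_rpow (by positivity) β

theorem choose_succ_mul_one_sub_sub_choose (m j : ℕ) (hm : m ≠ 0) (α : ℝ) :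
    ((m + 1).choose (j + 1) : ℝ) * (1 - (j + 1) / α / m) - m.choose (j + 1) =
      m.choose j * (1 - 1 / α - 1 / (α * m)) := by
  have hpascal : ((m + 1).choose (j + 1) : ℝ) = m.choose j + m.choose (j + 1) := by
    exact_mod_cast Nat.choose_succ_succ' m j
  have habsorb : ((m + 1).choose (j + 1) : ℝ) * (j + 1) = (m + 1) * m.choose j := by
    exact_mod_cast (Nat.add_one_mul_choose_eq m j).symm
  have hm' : (m : ℝ) ≠ 0 := Nat.cast_ne_zero.mpr hm
  linear_combination hpascal - habsorb / α / m - (m.choose j : ℝ) / α * (mul_inv_cancel₀ hm')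

theorem choose_pred_mul_le_choose_succ_mul_rpow_sub_choose {α r : ℝ} {m : ℕ} (j : ℕ)
    (hα : 0 < α) (hr : 1 ≤ r) (hrm : r ≤ m) (hm : m ≠ 0)
    (hfactor : 0 ≤ 1 - 1 / α - 1 / (α * m)) :
    ((m - 1).choose j : ℝ) * (1 - 1 / α - 1 / (α * (m - r + 1))) ≤
      ((m + 1).choose (j + 1) : ℝ) * (m / (m + 1)) ^ ((j + 1) / α) - m.choose (j + 1) := by
  have hm_pos : (0 : ℝ) < m := Nat.cast_pos.mpr (Nat.pos_of_ne_zero hm)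
  have hchoose : ((m - 1).choose j : ℝ) ≤ m.choose j := by
    exact_mod_cast Nat.choose_le_choose j (Nat.sub_le m 1)
  calc ((m - 1).choose j : ℝ) * (1 - 1 / α - 1 / (α * (m - r + 1)))
      ≤ (m - 1).choose j * (1 - 1 / α - 1 / (α * m)) := by
        gcongr
        linarith
    _ ≤ m.choose j * (1 - 1 / α - 1 / (α * m)) := by gcongr
    _ = ((m + 1).choose (j + 1) : ℝ) * (1 - (j + 1) / α / m) - m.choose (j + 1) :=
        (choose_succ_mul_one_sub_sub_choose m j hm α).symm
    _ ≤ _ := by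
        gcongr
        exact Real.one_sub_div_le_div_add_one_rpow hm_pos (by positivity)

theorem binom_rpow_ineq_general (α : ℝ) (hα : 1 < α) (r i : ℕ) (hr : 2 ≤ r)
    (hi1 : 1 ≤ i) :
    ∃ m₀ : ℕ, ∀ m : ℕ, m₀ ≤ m →
      ((m + 1).choose i : ℝ) * ((m : ℝ) / ((m : ℝ) + 1)) ^ ((i : ℝ) / α)
          - (m.choose i : ℝ) ≥
        ((m - 1).choose (i - 1) : ℝ) * (1 - 1 / α - 1 / (α * ((m : ℝ) - (r : ℝ) + 1))) := by
  obtain ⟨j, rfl⟩ : ∃ j, i = j + 1 := ⟨i - 1, (Nat.sub_add_cancel hi1).symm⟩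
  have hα₀ : 0 < α := zero_lt_one.trans hα
  have hfactor_lim : Tendsto (fun m : ℕ ↦ 1 - 1 / α - 1 / (α * m)) atTop (𝓝 (1 - 1 / α - 0)) :=
    tendsto_const_nhds.sub <| tendsto_const_nhds.div_atTop <|
      tendsto_natCast_atTop_atTop.const_mul_atTop hα₀
  have hfactor : ∀ᶠ m : ℕ in atTop, 0 ≤ 1 - 1 / α - 1 / (α * m) :=
    hfactor_lim.eventually_const_le (by rw [sub_zero, sub_pos, div_lt_one hα₀]; exact hα)
  obtain ⟨m₀, hm₀⟩ := eventually_atTop.mp <|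
    hfactor.and ((eventually_ge_atTop r).and (eventually_ne_atTop 0))
  refine ⟨m₀, fun m hm ↦ ?_⟩
  obtain ⟨hfactor_m, hrm, hm_ne⟩ := hm₀ m hm
  rw [Nat.add_sub_cancel, ge_iff_le]
  push_cast
  exact choose_pred_mul_le_choose_succ_mul_rpow_sub_choose j hα₀
    (by exact_mod_cast (by omega : 1 ≤ r)) (by exact_mod_cast hrm) hm_ne hfactor_m

/-- For α > 1, integers r ≥ 2 and 1 ≤ i ≤ r, for all sufficiently large m,
C(m+1,i)·(m/(m+1))^{i/α} − C(m,i) ≥ C(m−1,i−1)·(1 − 1/α − 1/(α(m−r+1))). -/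
theorem binom_rpow_ineq (α : ℝ) (hα : 1 < α) (r i : ℕ) (hr : 2 ≤ r)
    (hi1 : 1 ≤ i) (hir : i ≤ r) :
    ∃ m₀ : ℕ, ∀ m : ℕ, m₀ ≤ m →
      ((m + 1).choose i : ℝ) * ((m : ℝ) / ((m : ℝ) + 1)) ^ ((i : ℝ) / α)
          - (m.choose i : ℝ) ≥
        ((m - 1).choose (i - 1) : ℝ) * (1 - 1 / α - 1 / (α * ((m : ℝ) - (r : ℝ) + 1))) :=
  binom_rpow_ineq_general α hα r i hr hi1
end

section
/- Let α > 1 and let r ≥ 2, 1 ≤ i ≤ r be integers. For every integer m ≥ r, C(m+1, i)·(1 - i/(α·m)) - C(m, i) ≥ C(m-1, i-1)·(1 - 1/α - 1/(α(m-r+1))). -/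
/-- For α > 1, integers r ≥ 2, 1 ≤ i ≤ r, and every integer m ≥ r:
C(m+1,i)·(1 − i/(αm)) − C(m,i) ≥ C(m−1,i−1)·(1 − 1/α − 1/(α(m−r+1))). -/
theorem binom_ineq (α : ℝ) (hα : 1 < α) (r i : ℕ) (hr : 2 ≤ r)
    (hi1 : 1 ≤ i) (hir : i ≤ r) :
    ∀ m : ℕ, r ≤ m →
      ((m + 1).choose i : ℝ) * (1 - (i : ℝ) / (α * (m : ℝ))) - (m.choose i : ℝ) ≥
        ((m - 1).choose (i - 1) : ℝ) * (1 - 1 / α - 1 / (α * ((m : ℝ) - (r : ℝ) + 1))) := by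
  obtain ⟨j, rfl⟩ : ∃ j, i = j + 1 := ⟨i - 1, (Nat.sub_add_cancel hi1).symm⟩
  intro m hm
  obtain ⟨n, rfl⟩ : ∃ n, m = n + 1 :=
    ⟨m - 1, (Nat.sub_add_cancel (le_trans (le_trans one_le_two hr) hm)).symm⟩
  simp only [Nat.add_sub_cancel]
  have him : j + 1 ≤ n + 1 := hir.trans hm
  have hjn : j ≤ n := Nat.succ_le_succ_iff.mp him
  have hα0 : (0:ℝ) < α := lt_trans one_pos hα
  have hm0 : (0:ℝ) < (n:ℝ) + 1 := by positivity
  have hmr : (r:ℝ) ≤ (n:ℝ) + 1 := by exact_mod_cast hm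
  have hjr : (j:ℝ) + 1 ≤ (r:ℝ) := by exact_mod_cast hir
  have hjn' : (j:ℝ) ≤ (n:ℝ) := by exact_mod_cast hjn
  have hmr0 : (0:ℝ) < ((n:ℝ) + 1) - r + 1 := by linarith
  have ha : (0:ℝ) ≤ (n.choose j : ℝ) := Nat.cast_nonneg _
  have hab : (n.choose j : ℝ) ≤ ((n+1).choose j : ℝ) := by
    exact_mod_cast Nat.choose_le_choose j (Nat.le_succ n)
  have h2n : (n+1+1).choose (j+1) = (n+1).choose j + (n+1).choose (j+1) :=
    Nat.choose_succ_succ' (n+1) j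
  have h2 : (((n+1) + 1).choose (j+1) : ℝ) = ((n+1).choose j : ℝ) + ((n+1).choose (j+1) : ℝ) := by
    exact_mod_cast h2n
  have h1n : (n+1+1) * (n+1).choose j = (n+1+1).choose (j+1) * (j+1) :=
    Nat.add_one_mul_choose_eq (n+1) j
  have h1 : (((n+1)+1).choose (j+1) : ℝ) * ((j:ℝ) + 1) = (((n:ℝ) + 1) + 1) * ((n+1).choose j : ℝ) := by
    exact_mod_cast h1n.symm
  have h3 : (n.choose j : ℝ) * ((n:ℝ) + 1) = ((n+1).choose j : ℝ) * (((n:ℝ) + 1) - j) := by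
    have hc : n.choose j * (n+1) = (n+1).choose j * (n + 1 - j) := Nat.choose_mul_succ_eq n j
    have := congrArg (fun k : ℕ => (k : ℝ)) hc
    push_cast [Nat.cast_sub (hjn.trans (Nat.le_succ n))] at this
    linarith
  set a : ℝ := (n.choose j : ℝ)
  set b : ℝ := ((n+1).choose j : ℝ)
  set X : ℝ := ((n+1).choose (j+1) : ℝ)
  rw [h2] at h1 ⊢
  push_cast at h1 ⊢
  have hL : (b + X) * (1 - ((j:ℝ)+1) / (α * ((n:ℝ)+1))) - X
      = b - (((n:ℝ)+1)+1) * b / (α * ((n:ℝ)+1)) := by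
    field_simp
    linarith [h1]
  rw [hL]
  have hsplit : b - (((n:ℝ)+1)+1) * b / (α * ((n:ℝ)+1))
      = b - b / α - b / (α * ((n:ℝ)+1)) := by
    field_simp
    ring
  rw [hsplit, ge_iff_le,
    show a * (1 - 1 / α - 1 / (α * ((n:ℝ) + 1 - r + 1)))
      = a - a / α - a / (α * (((n:ℝ)+1) - r + 1)) from by ring]
  have t1 : a / α ≥ b / α - (b - a) := by
    have : (b - a) / α ≤ b - a := by
      rw [div_le_iff₀ hα0]
      nlinarith [sub_nonneg.mpr hab]
    have hd : b / α - a / α = (b - a) / α := by ring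
    linarith
  have t2 : b / (α * ((n:ℝ)+1)) ≤ a / (α * (((n:ℝ)+1) - r + 1)) := by
    rw [div_le_div_iff₀ (by positivity) (by positivity)]
    have hb0 : 0 ≤ b := le_trans ha hab
    have step : b * (((n:ℝ)+1) - r + 1) ≤ b * (((n:ℝ)+1) - j) := by
      apply mul_le_mul_of_nonneg_left _ hb0
      linarith
    nlinarith [h3]
  linarith
end

section
/- Let α > 1 and r ≥ 2, let G be an r-uniform hypergraph on n ≥ r+1 vertices with principal eigenvector x (nonnegative, ∑ x_v^α = 1, P_G(x) = λ^{(α)}(G)), and let k be a vertex with x_k minimal. Let G − k be the hypergraph obtained by deleting k and all edges containing it, and let x' be x restricted to the remaining vertices. Then P_{G−k}(x') = λ^{(α)}(G)·(1 − r·x_k^α), and consequently λ^{(α)}(G−k) ≥ λ^{(α)}(G) · (1 − r·x_k^α)/(1 − x_k^α)^{r/α}. -/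
/-!
`P_G` is homogeneous of degree `r`, so maximality of `x` on the unit `ℓ^α` sphere says
`P_G(y) ≤ λ ‖y‖_α^r` for every `y ≠ 0`. Moving only the coordinate `k` to `t`, the left side
`t·D + P_{G−k}(x)` is affine in `t` while the right side is `λ (1 − x_k^α + t^α)^{r/α}`; their
difference attains its maximum `0` at `t = x_k`, and the vanishing derivative there is the
eigenvalue equation `x_k·D = r λ x_k^α`. Hence `P_{G−k}(x) = λ − x_k D = λ (1 − r x_k^α)`.
Finally, `x` with `x_k := 0` has `ℓ^α`-mass `1 − x_k^α > 0` (as `x_k` is a minimal entry and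
there are at least two vertices), and its normalisation is a test vector for `λ(G−k)`.
-/

open Finset Function

section

variable {V : Type*}

noncomputable def edgePoly (r : ℕ) (H : Finset (Finset V)) (y : V → ℝ) : ℝ :=
  r.factorial * ∑ e ∈ H, ∏ v ∈ e, y v

theorem edgePoly_smul {r : ℕ} {H : Finset (Finset V)} (hH : ∀ e ∈ H, e.card = r) (c : ℝ)
    (y : V → ℝ) : edgePoly r H (c • y) = c ^ r * edgePoly r H y := by
  have hprod : ∀ e ∈ H, ∏ v ∈ e, (c • y) v = c ^ r * ∏ v ∈ e, y v := fun e he => by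
    simp only [Pi.smul_apply, smul_eq_mul, prod_mul_distrib, prod_const, hH e he]
  rw [edgePoly, edgePoly, sum_congr rfl hprod, ← mul_sum]
  ring

variable [DecidableEq V]

/-- `∂P_H/∂y_k`, the polynomial of the link of `k`. -/
noncomputable def linkPoly (r : ℕ) (H : Finset (Finset V)) (k : V) (y : V → ℝ) : ℝ :=
  r.factorial * ∑ e ∈ H.filter (k ∈ ·), ∏ v ∈ e.erase k, y v

theorem edgePoly_update_of_forall_notMem {r : ℕ} {H : Finset (Finset V)} {k : V}
    (hk : ∀ e ∈ H, k ∉ e) (y : V → ℝ) (t : ℝ) : edgePoly r H (update y k t) = edgePoly r H y := by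
  rw [edgePoly, edgePoly, sum_congr rfl fun e he => prod_update_of_notMem (hk e he) y t]

theorem edgePoly_update (r : ℕ) (H : Finset (Finset V)) (y : V → ℝ) (k : V) (t : ℝ) :
    edgePoly r H (update y k t) = t * linkPoly r H k y + edgePoly r (H.filter (k ∉ ·)) y := by
  have hmem : ∀ e ∈ H.filter (k ∈ ·), ∏ v ∈ e, update y k t v = t * ∏ v ∈ e.erase k, y v :=
    fun e he => by rw [prod_update_of_mem (mem_filter.1 he).2, sdiff_singleton_eq_erase]
  rw [← edgePoly_update_of_forall_notMem (fun e he => (mem_filter.1 he).2) y t, edgePoly,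
    edgePoly, ← sum_filter_add_sum_filter_not H (k ∈ ·), sum_congr rfl hmem, ← mul_sum, linkPoly]
  ring

theorem edgePoly_eq_mul_linkPoly_add (r : ℕ) (H : Finset (Finset V)) (y : V → ℝ) (k : V) :
    edgePoly r H y = y k * linkPoly r H k y + edgePoly r (H.filter (k ∉ ·)) y := by
  rw [← edgePoly_update, update_eq_self]

end

section

variable {V : Type*} [Fintype V]

theorem bddAbove_edgePoly_sphere (r : ℕ) (H : Finset (Finset V)) {α : ℝ} (hα : 0 < α) :
    BddAbove {p : ℝ | ∃ y : V → ℝ, ∑ v, |y v| ^ α = 1 ∧ p = edgePoly r H y} := by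
  refine ⟨r.factorial * H.card, ?_⟩
  rintro p ⟨y, hy, rfl⟩
  have hle_one : ∀ v, |y v| ≤ 1 := fun v => by
    by_contra! hlt
    have : |y v| ^ α ≤ 1 :=
      hy ▸ single_le_sum (f := fun w => |y w| ^ α) (fun w _ => by positivity) (mem_univ v)
    exact this.not_gt (Real.one_lt_rpow hlt hα)
  have hprod : ∀ e ∈ H, ∏ v ∈ e, y v ≤ 1 := fun e _ =>
    calc ∏ v ∈ e, y v ≤ ∏ v ∈ e, |y v| := (le_abs_self _).trans (abs_prod e y).le
      _ ≤ 1 := prod_le_one (fun v _ => abs_nonneg _) fun v _ => hle_one v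
  have := sum_le_card_nsmul H _ 1 hprod
  rw [nsmul_one] at this
  exact mul_le_mul_of_nonneg_left this (Nat.cast_nonneg _)

noncomputable def toUnitSphere (α : ℝ) (y : V → ℝ) : V → ℝ :=
  ((∑ v, |y v| ^ α) ^ α⁻¹)⁻¹ • y

theorem sum_abs_toUnitSphere_rpow {α : ℝ} (hα : α ≠ 0) {y : V → ℝ} (hy : 0 < ∑ v, |y v| ^ α) :
    ∑ v, |toUnitSphere α y v| ^ α = 1 := by
  set N := ∑ v, |y v| ^ α
  have hc : 0 ≤ (N ^ α⁻¹)⁻¹ := by positivity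
  have hterm : ∀ v, |toUnitSphere α y v| ^ α = N⁻¹ * |y v| ^ α := fun v => by
    rw [toUnitSphere, Pi.smul_apply, smul_eq_mul, abs_mul, abs_of_nonneg hc,
      Real.mul_rpow hc (abs_nonneg _), Real.inv_rpow (by positivity),
      Real.rpow_inv_rpow hy.le hα]
  simp only [hterm, ← mul_sum]
  exact inv_mul_cancel₀ hy.ne'

theorem edgePoly_toUnitSphere {r : ℕ} {H : Finset (Finset V)} (hH : ∀ e ∈ H, e.card = r)
    (α : ℝ) {y : V → ℝ} (hy : 0 ≤ ∑ v, |y v| ^ α) :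
    edgePoly r H (toUnitSphere α y) = edgePoly r H y / (∑ v, |y v| ^ α) ^ ((r : ℝ) / α) := by
  rw [toUnitSphere, edgePoly_smul hH, inv_pow, ← Real.rpow_natCast, ← Real.rpow_mul hy,
    ← div_eq_inv_mul (r : ℝ) α, div_eq_inv_mul (edgePoly r H y)]

theorem edgePoly_le_mul_rpow {r : ℕ} {H : Finset (Finset V)} (hH : ∀ e ∈ H, e.card = r)
    {α lam : ℝ} (hα : α ≠ 0) (hmax : ∀ z : V → ℝ, ∑ v, |z v| ^ α = 1 → edgePoly r H z ≤ lam)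
    {y : V → ℝ} (hy : 0 < ∑ v, |y v| ^ α) :
    edgePoly r H y ≤ lam * (∑ v, |y v| ^ α) ^ ((r : ℝ) / α) := by
  have := hmax _ (sum_abs_toUnitSphere_rpow hα hy)
  rwa [edgePoly_toUnitSphere hH α hy.le, div_le_iff₀ (by positivity)] at this

theorem card_mul_rpow_le_sum {α : ℝ} (hα : 0 ≤ α) {x : V → ℝ} {k : V}
    (hxk : 0 ≤ x k) (hk : ∀ v, x k ≤ x v) : Fintype.card V * x k ^ α ≤ ∑ v, x v ^ α := by
  have := card_nsmul_le_sum univ (fun v => x v ^ α) (x k ^ α)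
    fun v _ => Real.rpow_le_rpow hxk (hk v) hα
  rwa [card_univ, nsmul_eq_mul] at this

variable [DecidableEq V]

theorem sum_abs_update_rpow (α : ℝ) (y : V → ℝ) (k : V) (t : ℝ) :
    ∑ v, |update y k t v| ^ α = |t| ^ α + ∑ v ∈ univ.erase k, |y v| ^ α := by
  rw [← add_sum_erase _ _ (mem_univ k), update_self]
  congr 1
  exact sum_congr rfl fun v hv => by rw [update_of_ne (ne_of_mem_erase hv)]

theorem mul_linkPoly_eq_of_isMax {r : ℕ} {H : Finset (Finset V)}
    (hH : ∀ e ∈ H, e.card = r) {α lam : ℝ} (hα : 0 < α)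
    (hmax : ∀ z : V → ℝ, ∑ v, |z v| ^ α = 1 → edgePoly r H z ≤ lam) {x : V → ℝ}
    (hx : ∑ v, |x v| ^ α = 1) (hxlam : edgePoly r H x = lam) {k : V} (hxk : 0 ≤ x k) :
    x k * linkPoly r H k x = r * lam * x k ^ α := by
  rcases hxk.eq_or_lt with h0 | hpos
  · rw [← h0, Real.zero_rpow hα.ne']
    ring
  set S := ∑ v ∈ univ.erase k, |x v| ^ α
  have hS : S + x k ^ α = 1 := by
    rw [← hx, ← add_sum_erase _ _ (mem_univ k), abs_of_nonneg hxk]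
    ring
  set g : ℝ → ℝ := fun t => t * linkPoly r H k x + edgePoly r (H.filter (k ∉ ·)) x -
    lam * (S + t ^ α) ^ ((r : ℝ) / α)
  have hg_le : ∀ t > 0, g t ≤ 0 := fun t ht => by
    have h := edgePoly_le_mul_rpow hH hα.ne' hmax (y := update x k t)
      (by rw [sum_abs_update_rpow]; positivity)
    rw [edgePoly_update, sum_abs_update_rpow, abs_of_pos ht, add_comm (t ^ α)] at h
    exact sub_nonpos.2 h
  have hgu : g (x k) = 0 := by
    simp only [g, hS, Real.one_rpow, mul_one]
    rw [← edgePoly_eq_mul_linkPoly_add, hxlam, sub_self]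
  have hlocal : IsLocalMax g (x k) := by
    filter_upwards [Ioi_mem_nhds hpos] with t ht
    exact hgu ▸ hg_le t ht
  have hderiv : HasDerivAt g (linkPoly r H k x - lam * (r * x k ^ (α - 1))) (x k) := by
    have hnorm := ((Real.hasDerivAt_rpow_const (Or.inl hpos.ne')).const_add S).rpow_const
      (p := (r : ℝ) / α) (Or.inl (by rw [hS]; exact one_ne_zero))
    refine ((((hasDerivAt_id _).mul_const _).add_const _).sub
      (hnorm.const_mul lam)).congr_deriv ?_
    rw [hS, Real.one_rpow]
    field_simp
  have hlink : linkPoly r H k x = lam * (r * x k ^ (α - 1)) :=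
    sub_eq_zero.1 (hlocal.hasDerivAt_eq_zero hderiv)
  rw [hlink, Real.rpow_sub_one hpos.ne']
  field_simp

end

/-- Vertex-deletion identity and inequality for the α-spectral radius: if x is a
principal eigenvector of the r-uniform hypergraph G on n ≥ r+1 vertices, and k has
minimal component, then P_{G−k}(x') = λ·(1 − r·x_k^α) and
λ^{(α)}(G−k) ≥ λ·(1 − r·x_k^α)/(1 − x_k^α)^{r/α}. -/
theorem deletion_inequality {V : Type*} [Fintype V] [DecidableEq V] (r n : ℕ)
    (hr : 2 ≤ r) (hn : Fintype.card V = n) (hnr : r + 1 ≤ n) (α : ℝ) (hα : 1 < α)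
    (G : Finset (Finset V)) (hG : ∀ e ∈ G, e.card = r)
    (x : V → ℝ) (hx : ∀ v, 0 ≤ x v) (hsum : ∑ v, x v ^ α = 1)
    (lam : ℝ)
    (hlam : lam = sSup {p : ℝ | ∃ y : V → ℝ, ∑ v, |y v| ^ α = 1 ∧
      p = (r.factorial : ℝ) * ∑ e ∈ G, ∏ v ∈ e, y v})
    (hxlam : (r.factorial : ℝ) * ∑ e ∈ G, ∏ v ∈ e, x v = lam)
    (k : V) (hk : ∀ v, x k ≤ x v) :
    (r.factorial : ℝ) * ∑ e ∈ G.filter (fun e => k ∉ e), ∏ v ∈ e, x v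
        = lam * (1 - (r : ℝ) * x k ^ α) ∧
    lam * (1 - (r : ℝ) * x k ^ α) / (1 - x k ^ α) ^ ((r : ℝ) / α) ≤
      sSup {p : ℝ | ∃ y : V → ℝ, y k = 0 ∧ ∑ v, |y v| ^ α = 1 ∧
        p = (r.factorial : ℝ) * ∑ e ∈ G.filter (fun e => k ∉ e), ∏ v ∈ e, y v} := by
  have hα0 : 0 < α := one_pos.trans hα
  have hmax : ∀ z : V → ℝ, ∑ v, |z v| ^ α = 1 → edgePoly r G z ≤ lam := fun z hz =>
    hlam ▸ le_csSup (bddAbove_edgePoly_sphere r G hα0) ⟨z, hz, rfl⟩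
  have hPx : edgePoly r G x = lam := hxlam
  have hx1 : ∑ v, |x v| ^ α = 1 := by simpa only [abs_of_nonneg (hx _)] using hsum
  have hdel : edgePoly r (G.filter (k ∉ ·)) x = lam * (1 - r * x k ^ α) := by
    linear_combination hPx - edgePoly_eq_mul_linkPoly_add r G x k
      - mul_linkPoly_eq_of_isMax hG hα0 hmax hx1 hPx (hx k)
  refine ⟨hdel, ?_⟩
  have hxk_lt : x k ^ α < 1 := by
    have hcard := card_mul_rpow_le_sum hα0.le (hx k) hk
    have h2 : (2 : ℝ) ≤ n := by exact_mod_cast (by omega : 2 ≤ n)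
    rw [hn, hsum] at hcard
    nlinarith [Real.rpow_nonneg (hx k) α]
  have hx' : ∑ v, |update x k 0 v| ^ α = 1 - x k ^ α := by
    rw [sum_abs_update_rpow, abs_zero, Real.zero_rpow hα0.ne', zero_add, ← hx1,
      ← add_sum_erase _ _ (mem_univ k), abs_of_nonneg (hx k), add_sub_cancel_left]
  refine le_csSup ((bddAbove_edgePoly_sphere r (G.filter (k ∉ ·)) hα0).mono ?_)
    ⟨toUnitSphere α (update x k 0), by simp [toUnitSphere],
      sum_abs_toUnitSphere_rpow hα0.ne' (by linarith), ?_⟩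
  · rintro p ⟨y, -, hy, rfl⟩
    exact ⟨y, hy, rfl⟩
  · show _ = edgePoly r _ _
    rw [edgePoly_toUnitSphere (fun e he => hG e (mem_filter.1 he).1) α (by linarith), hx',
      edgePoly_update_of_forall_notMem (fun e he => (mem_filter.1 he).2), hdel]
end
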